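/- Let S be a k-family (k ≥ 2) with at least two facets whose ridge graph is complete, i.e., every two distinct facets of S intersect in exactly k−1 elements (matching number 1). Then λ₁(S) + λ₂(S) ≤ (k−1)·f_{k−1}(S) + k + 1; i.e., S satisfies the 2nd generalized Brouwer inequality. -/

import Mathlib

open scoped Matrix

/-- Signed boundary matrix of a `k`-family `S` on vertex set `Fin n`: rows are indexed
by the `(k-1)`-element subsets, columns by the facets; the `(R,F)` entry is `(-1)^j`
if `R ⊆ F` and the unique element of `F \ R` is the `(j+1)`-st smallest element of
`F`, and `0` otherwise. -/
noncomputable def bdry (n k : ℕ) (S : Finset (Finset (Fin n))) :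
    Matrix {R : Finset (Fin n) // R.card = k - 1} {F : Finset (Fin n) // F ∈ S} ℝ :=
  fun R F =>
    if R.1 ⊆ F.1 then
      ∑ x ∈ F.1 \ R.1, (-1 : ℝ) ^ (F.1.filter (fun y => y < x)).card
    else 0

/-- The Laplacian `∂ ∂ᵀ` of a `k`-family. -/
noncomputable def simpLap (n k : ℕ) (S : Finset (Finset (Fin n))) :
    Matrix {R : Finset (Fin n) // R.card = k - 1} {R : Finset (Fin n) // R.card = k - 1} ℝ :=
  bdry n k S * (bdry n k S).conjTranspose

lemma simpLap_isHermitian (n k : ℕ) (S : Finset (Finset (Fin n))) :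
    (simpLap n k S).IsHermitian :=
  Matrix.isHermitian_mul_conjTranspose_self _

/-- Sum of the `t` largest eigenvalues (with multiplicity) of a Hermitian real matrix. -/
noncomputable def topEigSum {m : Type} [Fintype m] [DecidableEq m]
    {A : Matrix m m ℝ} (hA : A.IsHermitian) (t : ℕ) : ℝ :=
  ((((Finset.univ.val.map hA.eigenvalues)).sort (· ≥ ·)).take t).sum

/-- The `t`-th generalized Brouwer inequality for a `k`-family `S`:
`λ₁(S) + ⋯ + λ_t(S) ≤ (k-1)·f_{k-1}(S) + C(t+k-1, k)`. -/
noncomputable def GenBrouwerIneq (n k : ℕ) (S : Finset (Finset (Fin n))) (t : ℕ) : Prop :=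
  topEigSum (simpLap_isHermitian n k S) t ≤
    ((k : ℝ) - 1) * S.card + ((t + k - 1).choose k : ℝ)

/-! ### Auxiliary spectral lemmas -/

lemma my_trace_eq_sum_eigen {m : Type} [Fintype m] [DecidableEq m] {A : Matrix m m ℝ}
    (hA : A.IsHermitian) : A.trace = ∑ i, hA.eigenvalues i := by
  simpa using hA.trace_eq_sum_eigenvalues

/-- The sum of the `t` largest eigenvalues is at most the trace, for a matrix with
nonnegative eigenvalues. -/
lemma topEigSum_le_trace {m : Type} [Fintype m] [DecidableEq m] {A : Matrix m m ℝ}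
    (hA : A.IsHermitian) (hpsd : ∀ i, 0 ≤ hA.eigenvalues i) (t : ℕ) :
    topEigSum hA t ≤ A.trace := by
  set l := ((Finset.univ.val.map hA.eigenvalues)).sort (· ≥ ·) with hl
  have hmem : ∀ x ∈ l, 0 ≤ x := by
    intro x hx
    rw [hl, Multiset.mem_sort] at hx
    obtain ⟨i, _, rfl⟩ := Multiset.mem_map.mp hx
    exact hpsd i
  have hsum : l.sum = A.trace := by
    rw [my_trace_eq_sum_eigen hA]
    have : (l : Multiset ℝ) = Finset.univ.val.map hA.eigenvalues := Multiset.sort_eq _ _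
    calc l.sum = ((l : Multiset ℝ)).sum := rfl
    _ = ∑ i, hA.eigenvalues i := by rw [this]; rfl
  have := List.take_append_drop t l
  have h2 : l.sum = (l.take t).sum + (l.drop t).sum := by
    conv_lhs => rw [← this]
    rw [List.sum_append]
  have h3 : 0 ≤ (l.drop t).sum := List.sum_nonneg (fun x hx => hmem x (List.mem_of_mem_drop hx))
  unfold topEigSum
  rw [← hl, ← hsum, h2]
  linarith

/-- If every eigenvalue is at most `c₁`, and all but at most one are at most `c₂`, then the
sum of the two largest eigenvalues is at most `c₁ + c₂`. -/
lemma topEigSum_two_le {m : Type} [Fintype m] [DecidableEq m] {A : Matrix m m ℝ}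
    (hA : A.IsHermitian) (c₁ c₂ : ℝ) (h0 : 0 ≤ c₂) (h12 : c₂ ≤ c₁)
    (hup : ∀ i, hA.eigenvalues i ≤ c₁)
    (hone : ∀ i j, i ≠ j → hA.eigenvalues i ≤ c₂ ∨ hA.eigenvalues j ≤ c₂) :
    topEigSum hA 2 ≤ c₁ + c₂ := by
  unfold topEigSum
  set l := ((Finset.univ.val.map hA.eigenvalues)).sort (· ≥ ·) with hl
  have hsorted : l.Pairwise (· ≥ ·) := Multiset.pairwise_sort _ _
  have hmem : ∀ x ∈ l, x ≤ c₁ := by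
    intro x hx
    rw [hl, Multiset.mem_sort] at hx
    obtain ⟨i, _, rfl⟩ := Multiset.mem_map.mp hx
    exact hup i
  have hcnt : (Finset.univ.filter (fun i => c₂ < hA.eigenvalues i)).card ≤ 1 := by
    apply Finset.card_le_one.mpr
    intro a ha b hb
    simp only [Finset.mem_filter] at ha hb
    by_contra hab
    rcases hone a b hab with h | h
    · exact absurd h (not_le.mpr ha.2)
    · exact absurd h (not_le.mpr hb.2)
  have hcntl : l.countP (fun x => decide (c₂ < x)) ≤ 1 := by
    have h1 : (l : Multiset ℝ).countP (fun x => c₂ < x) = l.countP (fun x => decide (c₂ < x)) :=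
      Multiset.coe_countP _ _
    have h2 : ((l : Multiset ℝ)).countP (fun x => c₂ < x)
        = (Finset.univ.val.map hA.eigenvalues).countP (fun x => c₂ < x) := by
      rw [hl, Multiset.sort_eq]
    rw [← h1, h2, Multiset.countP_map]
    exact hcnt
  match hll : l with
  | [] => simp; linarith
  | [a] =>
    simp only [List.take, List.sum_cons, List.sum_nil, add_zero]
    have := hmem a (by simp)
    linarith
  | a :: b :: t =>
    have hsum : (List.take 2 (a :: b :: t)).sum = a + b := by simp
    rw [hsum]
    have hab : b ≤ a := (List.pairwise_cons.mp hsorted).1 b (by simp)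
    have hb : b ≤ c₂ := by
      by_contra hbc
      push_neg at hbc
      have hac : c₂ < a := lt_of_lt_of_le hbc hab
      have : 2 ≤ (a :: b :: t).countP (fun x => decide (c₂ < x)) := by
        rw [List.countP_cons_of_pos (by simpa using hac),
            List.countP_cons_of_pos (by simpa using hbc)]
        omega
      omega
    have ha := hmem a (by simp)
    linarith

/-! ### Entries of the boundary matrix -/

lemma bdry_mul_self {n k : ℕ} {S : Finset (Finset (Fin n))} (hk : 1 ≤ k)
    (R : {R : Finset (Fin n) // R.card = k - 1}) (F : {F : Finset (Fin n) // F ∈ S})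
    (hF : F.1.card = k) (hRF : R.1 ⊆ F.1) :
    bdry n k S R F * bdry n k S R F = 1 := by
  have hcard : (F.1 \ R.1).card = 1 := by
    rw [Finset.card_sdiff_of_subset hRF, hF, R.2]; omega
  obtain ⟨x, hx⟩ := Finset.card_eq_one.mp hcard
  rw [bdry, if_pos hRF, hx, Finset.sum_singleton, ← mul_pow]
  norm_num

lemma bdry_eq_zero {n k : ℕ} {S : Finset (Finset (Fin n))}
    (R : {R : Finset (Fin n) // R.card = k - 1}) (F : {F : Finset (Fin n) // F ∈ S})
    (h : ¬ R.1 ⊆ F.1) : bdry n k S R F = 0 := if_neg h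

lemma col_sq_sum {n k : ℕ} {S : Finset (Finset (Fin n))} (hk : 1 ≤ k)
    (F : {F : Finset (Fin n) // F ∈ S}) (hF : F.1.card = k) :
    ∑ R : {R : Finset (Fin n) // R.card = k - 1}, bdry n k S R F * bdry n k S R F = (k : ℝ) := by
  have h1 : ∀ R : {R : Finset (Fin n) // R.card = k - 1},
      bdry n k S R F * bdry n k S R F = if R.1 ⊆ F.1 then (1:ℝ) else 0 := by
    intro R
    by_cases h : R.1 ⊆ F.1
    · rw [if_pos h, bdry_mul_self hk R F hF h]
    · rw [if_neg h, bdry_eq_zero R F h, mul_zero]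
  rw [Finset.sum_congr rfl (fun R _ => h1 R)]
  rw [Finset.sum_ite, Finset.sum_const_zero, add_zero]
  simp only [Finset.sum_const, nsmul_eq_mul, mul_one]
  have hbij : (Finset.univ.filter
      (fun R : {R : Finset (Fin n) // R.card = k - 1} => R.1 ⊆ F.1)).card
      = (F.1.powersetCard (k-1)).card := by
    apply Finset.card_bij (fun R _ => R.1)
    · intro R hR
      simp only [Finset.mem_filter, Finset.mem_univ, true_and] at hR
      rw [Finset.mem_powersetCard]
      exact ⟨hR, R.2⟩
    · intro a ha b hb hab
      exact Subtype.ext hab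
    · intro P hP
      rw [Finset.mem_powersetCard] at hP
      exact ⟨⟨P, hP.2⟩, by simpa using hP.1, rfl⟩
  rw [hbij, Finset.card_powersetCard, hF]
  have : k.choose (k-1) = k := by
    have h := Nat.choose_symm (n := k) (k := 1) hk
    simpa [Nat.choose_one_right] using h
  rw [this]

lemma simpLap_trace {n k : ℕ} {S : Finset (Finset (Fin n))} (hk : 1 ≤ k)
    (hcard : ∀ F ∈ S, F.card = k) :
    (simpLap n k S).trace = (k : ℝ) * S.card := by
  rw [simpLap, Matrix.trace_mul_comm, Matrix.trace]
  have : ∀ F : {F : Finset (Fin n) // F ∈ S},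
      ((bdry n k S).conjTranspose * bdry n k S).diag F = (k : ℝ) := by
    intro F
    rw [Matrix.diag_apply, Matrix.mul_apply]
    simp only [Matrix.conjTranspose_apply, star_trivial]
    exact col_sq_sum hk F (hcard F.1 F.2)
  rw [Finset.sum_congr rfl (fun F _ => this F)]
  rw [Finset.sum_const]
  rw [Finset.card_univ, Fintype.card_coe]
  simp [mul_comm]

lemma my_vecMulVec_mulVec {m p : Type} [Fintype p] (w : m → ℝ) (v : p → ℝ) (x : p → ℝ) :
    Matrix.vecMulVec w v *ᵥ x = (v ⬝ᵥ x) • w := by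
  funext i
  simp only [Matrix.mulVec, dotProduct, Matrix.vecMulVec_apply, Pi.smul_apply,
    smul_eq_mul, Finset.mul_sum, Finset.sum_mul]
  exact Finset.sum_congr rfl (fun j _ => by ring)

/-! ### The sunflower (star) structure when there are many facets -/

lemma star_of_big {n k : ℕ} (hk : 2 ≤ k) {S : Finset (Finset (Fin n))}
    (hbig : k + 2 ≤ S.card)
    (hcard : ∀ F ∈ S, F.card = k)
    (hridge : ∀ F ∈ S, ∀ G ∈ S, F ≠ G → (F ∩ G).card = k - 1) :
    ∃ R₀ : Finset (Fin n), R₀.card = k - 1 ∧ ∀ F ∈ S, R₀ ⊆ F := by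
  obtain ⟨F, hF, G, hG, hFG⟩ := Finset.one_lt_card.mp (by omega : 1 < S.card)
  set A := F ∩ G with hA
  have hAcard : A.card = k - 1 := hridge F hF G hG hFG
  have hAF : A ⊆ F := Finset.inter_subset_left
  have hAG : A ⊆ G := Finset.inter_subset_right
  have hFk := hcard F hF
  have hGk := hcard G hG
  have hDF : (F \ A).card = 1 := by rw [Finset.card_sdiff_of_subset hAF, hFk, hAcard]; omega
  have hDG : (G \ A).card = 1 := by rw [Finset.card_sdiff_of_subset hAG, hGk, hAcard]; omega
  have hFunion : F = A ∪ (F \ A) := (Finset.union_sdiff_of_subset hAF).symm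
  have hGunion : G = A ∪ (G \ A) := (Finset.union_sdiff_of_subset hAG).symm
  have claim1 : ∀ H ∈ S, A ⊆ H ∨ H ⊆ F ∪ G := by
    intro H hH
    by_cases hHF : H = F
    · exact Or.inl (hHF ▸ hAF)
    by_cases hHG : H = G
    · exact Or.inl (hHG ▸ hAG)
    have hHFc : (H ∩ F).card = k - 1 := hridge H hH F hF hHF
    have hHGc : (H ∩ G).card = k - 1 := hridge H hH G hG hHG
    by_cases haH : F \ A ⊆ H
    · by_cases hbH : G \ A ⊆ H
      · right
        have hsplit : H ∩ F = (H ∩ A) ∪ (F \ A) := by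
          conv_lhs => rw [hFunion]
          rw [Finset.inter_union_distrib_left]
          congr 1
          exact Finset.inter_eq_right.mpr haH
        have hdisj : Disjoint (H ∩ A) (F \ A) :=
          (Finset.disjoint_sdiff.mono_left Finset.inter_subset_right)
        have hHA : (H ∩ A).card = k - 2 := by
          have := hHFc
          rw [hsplit, Finset.card_union_of_disjoint hdisj, hDF] at this
          omega
        have hsub : (H ∩ A) ∪ (F \ A) ∪ (G \ A) ⊆ H :=
          Finset.union_subset (Finset.union_subset Finset.inter_subset_left haH) hbH
        have hdisj2 : Disjoint ((H ∩ A) ∪ (F \ A)) (G \ A) := by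
          rw [Finset.disjoint_union_left]
          constructor
          · exact Finset.disjoint_sdiff.mono_left Finset.inter_subset_right
          · rw [Finset.disjoint_left]
            intro x hxF hxG
            rw [Finset.mem_sdiff] at hxF hxG
            exact hxG.2 (by rw [hA]; exact Finset.mem_inter.mpr ⟨hxF.1, hxG.1⟩)
        have hcardsub : ((H ∩ A) ∪ (F \ A) ∪ (G \ A)).card = k := by
          rw [Finset.card_union_of_disjoint hdisj2, Finset.card_union_of_disjoint hdisj,
            hHA, hDF, hDG]
          omega
        have hEq : (H ∩ A) ∪ (F \ A) ∪ (G \ A) = H :=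
          Finset.eq_of_subset_of_card_le hsub (by rw [hcardsub, hcard H hH])
        intro x hx
        rw [← hEq] at hx
        simp only [Finset.mem_union, Finset.mem_inter, Finset.mem_sdiff] at hx
        rcases hx with (⟨_, hxA⟩ | ⟨hxF, _⟩) | ⟨hxG, _⟩
        · exact Finset.mem_union_left _ (hAF hxA)
        · exact Finset.mem_union_left _ hxF
        · exact Finset.mem_union_right _ hxG
      · left
        obtain ⟨b, hbG, hbH'⟩ := Finset.not_subset.mp hbH
        have hsub : H ∩ G ⊆ A := by
          intro x hx
          rw [Finset.mem_inter] at hx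
          by_contra hxA
          have hxGA : x ∈ G \ A := Finset.mem_sdiff.mpr ⟨hx.2, hxA⟩
          have : x = b := Finset.card_le_one.mp (le_of_eq hDG) x hxGA b hbG
          exact hbH' (this ▸ hx.1)
        have : H ∩ G = A := Finset.eq_of_subset_of_card_le hsub (by rw [hHGc, hAcard])
        rw [← this]
        exact Finset.inter_subset_left
    · left
      obtain ⟨a, haF, haH'⟩ := Finset.not_subset.mp haH
      have hsub : H ∩ F ⊆ A := by
        intro x hx
        rw [Finset.mem_inter] at hx
        by_contra hxA
        have hxFA : x ∈ F \ A := Finset.mem_sdiff.mpr ⟨hx.2, hxA⟩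
        have : x = a := Finset.card_le_one.mp (le_of_eq hDF) x hxFA a haF
        exact haH' (this ▸ hx.1)
      have : H ∩ F = A := Finset.eq_of_subset_of_card_le hsub (by rw [hHFc, hAcard])
      rw [← this]
      exact Finset.inter_subset_left
  have hFGcard : (F ∪ G).card = k + 1 := by
    have := Finset.card_union_add_card_inter F G
    rw [hFk, hGk, ← hA, hAcard] at this
    omega
  have hex : ∃ H₀ ∈ S, ¬ H₀ ⊆ F ∪ G := by
    by_contra hall
    push_neg at hall
    have hSsub : S ⊆ (F ∪ G).powersetCard k := by
      intro H hH
      rw [Finset.mem_powersetCard]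
      exact ⟨hall H hH, hcard H hH⟩
    have := Finset.card_le_card hSsub
    rw [Finset.card_powersetCard, hFGcard] at this
    have hch : (k+1).choose k = k + 1 := by
      have h := Nat.choose_symm (n := k+1) (k := 1) (by omega)
      simp only [Nat.add_sub_cancel, Nat.choose_one_right] at h
      omega
    omega
  obtain ⟨H₀, hH₀S, hH₀⟩ := hex
  have hAH₀ : A ⊆ H₀ := by
    rcases claim1 H₀ hH₀S with h | h
    · exact h
    · exact absurd h hH₀
  have hH₀union : H₀ = A ∪ (H₀ \ A) := (Finset.union_sdiff_of_subset hAH₀).symm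
  have hD₀ : (H₀ \ A).card = 1 := by
    rw [Finset.card_sdiff_of_subset hAH₀, hcard H₀ hH₀S, hAcard]; omega
  have hD₀disj : ∀ x ∈ H₀ \ A, x ∉ F ∪ G := by
    intro x hx hxFG
    apply hH₀
    conv_lhs => rw [hH₀union]
    apply Finset.union_subset (hAF.trans Finset.subset_union_left)
    intro y hy
    have : y = x := Finset.card_le_one.mp (le_of_eq hD₀) y hy x hx
    exact this ▸ hxFG
  refine ⟨A, hAcard, ?_⟩
  intro H hH
  rcases claim1 H hH with h | h
  · exact h
  · have hHH₀ : H ≠ H₀ := by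
      intro hEq
      exact hH₀ (hEq ▸ h)
    have hcap : H ∩ H₀ ⊆ A := by
      intro x hx
      rw [Finset.mem_inter] at hx
      have hxH₀ := hx.2
      conv at hxH₀ => rw [hH₀union]
      rcases Finset.mem_union.mp hxH₀ with h1 | h1
      · exact h1
      · exact absurd (h hx.1) (hD₀disj x h1)
    have : H ∩ H₀ = A := Finset.eq_of_subset_of_card_le hcap
      (by rw [hridge H hH H₀ hH₀S hHH₀, hAcard])
    rw [← this]
    exact Finset.inter_subset_left

/-! ### Spectral analysis in the star case -/

section Star

variable {n k : ℕ} {S : Finset (Finset (Fin n))}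

lemma star_gram (hk : 2 ≤ k) (hcard : ∀ F ∈ S, F.card = k)
    (hridge : ∀ F ∈ S, ∀ G ∈ S, F ≠ G → (F ∩ G).card = k - 1)
    (R₀ : Finset (Fin n)) (hR₀ : R₀.card = k - 1) (hstar : ∀ F ∈ S, R₀ ⊆ F) :
    (bdry n k S).conjTranspose * bdry n k S
      = ((k : ℝ) - 1) • 1 + Matrix.vecMulVec (fun F => bdry n k S ⟨R₀, hR₀⟩ F)
          (fun F => bdry n k S ⟨R₀, hR₀⟩ F) := by
  ext F G
  simp only [Matrix.mul_apply, Matrix.conjTranspose_apply, star_trivial, Matrix.add_apply,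
    Matrix.smul_apply, Matrix.one_apply, Matrix.vecMulVec_apply, smul_eq_mul]
  by_cases hFG : F = G
  · subst hFG
    rw [if_pos rfl, mul_one]
    have h1 : ∑ R : {R : Finset (Fin n) // R.card = k - 1},
        bdry n k S R F * bdry n k S R F = (k : ℝ) := col_sq_sum (by omega) F (hcard F.1 F.2)
    rw [h1, bdry_mul_self (by omega) ⟨R₀, hR₀⟩ F (hcard F.1 F.2) (hstar F.1 F.2)]
    ring
  · rw [if_neg hFG, mul_zero, zero_add]
    have hne : F.1 ≠ G.1 := fun h => hFG (Subtype.ext h)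
    have hFGcard : (F.1 ∩ G.1).card = k - 1 := hridge F.1 F.2 G.1 G.2 hne
    have hR₀FG : R₀ = F.1 ∩ G.1 := by
      apply Finset.eq_of_subset_of_card_le
        (Finset.subset_inter (hstar F.1 F.2) (hstar G.1 G.2))
      rw [hFGcard, hR₀]
    apply Finset.sum_eq_single_of_mem (⟨R₀, hR₀⟩ : {R : Finset (Fin n) // R.card = k - 1})
      (Finset.mem_univ _)
    intro R _ hRne
    by_cases h1 : R.1 ⊆ F.1
    · by_cases h2 : R.1 ⊆ G.1
      · exfalso
        apply hRne
        apply Subtype.ext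
        have : R.1 = F.1 ∩ G.1 := by
          apply Finset.eq_of_subset_of_card_le (Finset.subset_inter h1 h2)
          rw [hFGcard, R.2]
        rw [this, ← hR₀FG]
      · rw [bdry_eq_zero R G h2, mul_zero]
    · rw [bdry_eq_zero R F h1, zero_mul]

lemma star_L_sq (hk : 2 ≤ k) (hcard : ∀ F ∈ S, F.card = k)
    (hridge : ∀ F ∈ S, ∀ G ∈ S, F ≠ G → (F ∩ G).card = k - 1)
    (R₀ : Finset (Fin n)) (hR₀ : R₀.card = k - 1) (hstar : ∀ F ∈ S, R₀ ⊆ F) :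
    simpLap n k S * simpLap n k S
      = ((k : ℝ) - 1) • simpLap n k S +
        Matrix.vecMulVec (bdry n k S *ᵥ (fun F => bdry n k S ⟨R₀, hR₀⟩ F))
          (bdry n k S *ᵥ (fun F => bdry n k S ⟨R₀, hR₀⟩ F)) := by
  set B := bdry n k S with hB
  set ε : {F : Finset (Fin n) // F ∈ S} → ℝ := fun F => B ⟨R₀, hR₀⟩ F with hε
  have hM := star_gram hk hcard hridge R₀ hR₀ hstar
  have hBT : Bᴴ = Bᵀ := by
    ext i j; simp [Matrix.conjTranspose_apply]
  have key : simpLap n k S * simpLap n k S = B * (Bᴴ * B) * Bᴴ := by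
    rw [simpLap]
    simp only [← hB, Matrix.mul_assoc]
  rw [key, hM, Matrix.mul_add, Matrix.add_mul]
  congr 1
  · rw [Matrix.mul_smul, Matrix.smul_mul, Matrix.mul_one, simpLap]
  · ext i j
    simp only [Matrix.mul_apply, Matrix.vecMulVec_apply, Matrix.conjTranspose_apply,
      star_trivial, Matrix.mulVec, dotProduct, Finset.sum_mul]
    rw [Finset.sum_comm]
    apply Finset.sum_congr rfl
    intro F _
    rw [Finset.mul_sum]
    apply Finset.sum_congr rfl
    intro G _
    ring

lemma star_u_norm (hk : 2 ≤ k) (hcard : ∀ F ∈ S, F.card = k)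
    (hridge : ∀ F ∈ S, ∀ G ∈ S, F ≠ G → (F ∩ G).card = k - 1)
    (R₀ : Finset (Fin n)) (hR₀ : R₀.card = k - 1) (hstar : ∀ F ∈ S, R₀ ⊆ F) :
    (bdry n k S *ᵥ (fun F => bdry n k S ⟨R₀, hR₀⟩ F)) ⬝ᵥ
      (bdry n k S *ᵥ (fun F => bdry n k S ⟨R₀, hR₀⟩ F))
      = ((k : ℝ) - 1) * S.card + S.card * S.card := by
  set B := bdry n k S with hB
  set ε : {F : Finset (Fin n) // F ∈ S} → ℝ := fun F => B ⟨R₀, hR₀⟩ F with hε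
  have hεsq : ∀ F, ε F * ε F = 1 := fun F =>
    bdry_mul_self (by omega) ⟨R₀, hR₀⟩ F (hcard F.1 F.2) (hstar F.1 F.2)
  have hεε : ε ⬝ᵥ ε = (S.card : ℝ) := by
    rw [dotProduct]
    rw [Finset.sum_congr rfl (fun F _ => hεsq F), Finset.sum_const, Finset.card_univ,
      Fintype.card_coe, nsmul_eq_mul, mul_one]
  have hBT : Bᴴ = Bᵀ := by
    ext i j; simp [Matrix.conjTranspose_apply]
  have h1 : (B *ᵥ ε) ⬝ᵥ (B *ᵥ ε) = ε ⬝ᵥ ((Bᴴ * B) *ᵥ ε) := by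
    rw [Matrix.dotProduct_mulVec, Matrix.vecMul_mulVec, ← hBT,
      ← Matrix.dotProduct_mulVec]
  rw [h1, star_gram hk hcard hridge R₀ hR₀ hstar, Matrix.add_mulVec,
    Matrix.smul_mulVec, Matrix.one_mulVec, my_vecMulVec_mulVec,
    dotProduct_add, dotProduct_smul, dotProduct_smul, hεε,
    smul_eq_mul, smul_eq_mul]

lemma star_eig_bounds (hk : 2 ≤ k) (h2 : 2 ≤ S.card) (hcard : ∀ F ∈ S, F.card = k)
    (hridge : ∀ F ∈ S, ∀ G ∈ S, F ≠ G → (F ∩ G).card = k - 1)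
    (R₀ : Finset (Fin n)) (hR₀ : R₀.card = k - 1) (hstar : ∀ F ∈ S, R₀ ⊆ F) :
    (∀ i, (simpLap_isHermitian n k S).eigenvalues i ≤ (S.card : ℝ) + (k : ℝ) - 1) ∧
    (∀ i j, i ≠ j → (simpLap_isHermitian n k S).eigenvalues i ≤ (k : ℝ) - 1 ∨
      (simpLap_isHermitian n k S).eigenvalues j ≤ (k : ℝ) - 1) := by
  have hkR : (2 : ℝ) ≤ (k : ℝ) := by exact_mod_cast hk
  have hfR : (2 : ℝ) ≤ (S.card : ℝ) := by exact_mod_cast h2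
  set hL := simpLap_isHermitian n k S with hhL
  set u := bdry n k S *ᵥ (fun F => bdry n k S ⟨R₀, hR₀⟩ F) with hu_def
  have hLsq := star_L_sq hk hcard hridge R₀ hR₀ hstar
  have hu : u ⬝ᵥ u = ((k : ℝ) - 1) * S.card + S.card * S.card :=
    star_u_norm hk hcard hridge R₀ hR₀ hstar
  have hpsdM : (simpLap n k S).PosSemidef := by
    rw [simpLap]; exact Matrix.posSemidef_self_mul_conjTranspose _
  have hpsd : ∀ i, 0 ≤ hL.eigenvalues i := fun i => hpsdM.eigenvalues_nonneg i
  set v : {R : Finset (Fin n) // R.card = k - 1} → {R : Finset (Fin n) // R.card = k - 1} → ℝ :=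
    fun i => ⇑(hL.eigenvectorBasis i) with hv
  have hinner : ∀ i j, v i ⬝ᵥ v j = if i = j then 1 else 0 := by
    intro i j
    have := orthonormal_iff_ite.mp hL.eigenvectorBasis.orthonormal i j
    rw [PiLp.inner_apply] at this
    simpa [dotProduct, RCLike.inner_apply, conj_trivial, mul_comm] using this
  have heq : ∀ i, (hL.eigenvalues i ^ 2 - ((k : ℝ) - 1) * hL.eigenvalues i) • v i
      = (u ⬝ᵥ v i) • u := by
    intro i
    have h1 : simpLap n k S *ᵥ v i = hL.eigenvalues i • v i := hL.mulVec_eigenvectorBasis i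
    have h2 : (simpLap n k S * simpLap n k S) *ᵥ v i
        = (hL.eigenvalues i ^ 2) • v i := by
      rw [← Matrix.mulVec_mulVec, h1, Matrix.mulVec_smul, h1, smul_smul, ← sq]
    rw [hLsq, Matrix.add_mulVec, Matrix.smul_mulVec, h1, my_vecMulVec_mulVec,
      smul_smul] at h2
    rw [← hu_def] at h2
    rw [sub_smul, ← h2]
    abel
  have hdot : ∀ i, hL.eigenvalues i ^ 2 - ((k : ℝ) - 1) * hL.eigenvalues i
      = (u ⬝ᵥ v i) * (u ⬝ᵥ v i) := by
    intro i
    have := congrArg (fun w => w ⬝ᵥ v i) (heq i)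
    simp only [smul_dotProduct, smul_eq_mul] at this
    rw [hinner i i, if_pos rfl, mul_one] at this
    exact this
  have hCS : ∀ i, (u ⬝ᵥ v i) * (u ⬝ᵥ v i) ≤ ((k : ℝ) - 1) * S.card + S.card * S.card := by
    intro i
    have h := Finset.sum_mul_sq_le_sq_mul_sq Finset.univ u (v i)
    have h1 : (u ⬝ᵥ v i) ^ 2 ≤ (u ⬝ᵥ u) * (v i ⬝ᵥ v i) := by
      simpa [dotProduct, sq, Finset.mul_sum] using h
    rw [hinner i i, if_pos rfl, mul_one, hu] at h1
    calc (u ⬝ᵥ v i) * (u ⬝ᵥ v i) = (u ⬝ᵥ v i) ^ 2 := (sq _).symm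
    _ ≤ _ := h1
  constructor
  · intro i
    have h1 := (hdot i).trans_le (hCS i)
    have h0 := hpsd i
    nlinarith [h1, h0, hkR, hfR]
  · intro i j hij
    by_contra hcon
    push_neg at hcon
    obtain ⟨hi, hj⟩ := hcon
    have hci : 0 < hL.eigenvalues i ^ 2 - ((k : ℝ) - 1) * hL.eigenvalues i := by nlinarith
    have hcj : 0 < hL.eigenvalues j ^ 2 - ((k : ℝ) - 1) * hL.eigenvalues j := by nlinarith
    have hdi : u ⬝ᵥ v i ≠ 0 := by
      intro h; rw [hdot i, h, mul_zero] at hci; exact lt_irrefl _ hci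
    have hdj : u ⬝ᵥ v j ≠ 0 := by
      intro h; rw [hdot j, h, mul_zero] at hcj; exact lt_irrefl _ hcj
    have hvi : v i = ((hL.eigenvalues i ^ 2 - ((k : ℝ) - 1) * hL.eigenvalues i)⁻¹
        * (u ⬝ᵥ v i)) • u := by
      calc v i = (hL.eigenvalues i ^ 2 - ((k : ℝ) - 1) * hL.eigenvalues i)⁻¹
          • ((hL.eigenvalues i ^ 2 - ((k : ℝ) - 1) * hL.eigenvalues i) • v i) := by
            rw [smul_smul, inv_mul_cancel₀ (ne_of_gt hci), one_smul]
      _ = _ := by rw [heq i, smul_smul]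
    have hvj : v j = ((hL.eigenvalues j ^ 2 - ((k : ℝ) - 1) * hL.eigenvalues j)⁻¹
        * (u ⬝ᵥ v j)) • u := by
      calc v j = (hL.eigenvalues j ^ 2 - ((k : ℝ) - 1) * hL.eigenvalues j)⁻¹
          • ((hL.eigenvalues j ^ 2 - ((k : ℝ) - 1) * hL.eigenvalues j) • v j) := by
            rw [smul_smul, inv_mul_cancel₀ (ne_of_gt hcj), one_smul]
      _ = _ := by rw [heq j, smul_smul]
    have h0 : v i ⬝ᵥ v j = 0 := by rw [hinner i j, if_neg hij]
    rw [hvi, hvj, smul_dotProduct, dotProduct_smul, smul_eq_mul,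
      smul_eq_mul] at h0
    have huu : 0 < u ⬝ᵥ u := by rw [hu]; nlinarith
    have hne1 : ((hL.eigenvalues i ^ 2 - ((k : ℝ) - 1) * hL.eigenvalues i)⁻¹ * (u ⬝ᵥ v i)) ≠ 0 :=
      mul_ne_zero (inv_ne_zero (ne_of_gt hci)) hdi
    have hne2 : ((hL.eigenvalues j ^ 2 - ((k : ℝ) - 1) * hL.eigenvalues j)⁻¹ * (u ⬝ᵥ v j)) ≠ 0 :=
      mul_ne_zero (inv_ne_zero (ne_of_gt hcj)) hdj
    exact (mul_ne_zero hne1 (mul_ne_zero hne2 (ne_of_gt huu))) h0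

end Star

/-- A `k`-family with at least two facets whose ridge graph is complete (matching
number 1) satisfies the second generalized Brouwer inequality:
`λ₁(S) + λ₂(S) ≤ (k-1)·f_{k-1}(S) + k + 1`. -/
theorem genBrouwer_two_of_matching_one (n k : ℕ) (hk : 2 ≤ k)
    (S : Finset (Finset (Fin n))) (h2 : 2 ≤ S.card)
    (hcard : ∀ F ∈ S, F.card = k)
    (hridge : ∀ F ∈ S, ∀ G ∈ S, F ≠ G → (F ∩ G).card = k - 1) :
    topEigSum (simpLap_isHermitian n k S) 2 ≤
      ((k : ℝ) - 1) * S.card + (k : ℝ) + 1 := by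
  have hkR : (2 : ℝ) ≤ (k : ℝ) := by exact_mod_cast hk
  have hfR : (2 : ℝ) ≤ (S.card : ℝ) := by exact_mod_cast h2
  by_cases hsmall : S.card ≤ k + 1
  · have htr : (simpLap n k S).trace = (k : ℝ) * S.card := simpLap_trace (by omega) hcard
    have hpsdM : (simpLap n k S).PosSemidef := by
      rw [simpLap]; exact Matrix.posSemidef_self_mul_conjTranspose _
    have h := topEigSum_le_trace (simpLap_isHermitian n k S)
      (fun i => hpsdM.eigenvalues_nonneg i) 2
    rw [htr] at h
    have hsR : (S.card : ℝ) ≤ (k : ℝ) + 1 := by exact_mod_cast hsmall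
    nlinarith [h, hsR, hkR, hfR]
  · push_neg at hsmall
    obtain ⟨R₀, hR₀, hstar⟩ := star_of_big hk (by omega) hcard hridge
    obtain ⟨hup, hone⟩ := star_eig_bounds hk h2 hcard hridge R₀ hR₀ hstar
    have h := topEigSum_two_le (simpLap_isHermitian n k S)
      ((S.card : ℝ) + (k : ℝ) - 1) ((k : ℝ) - 1)
      (by linarith) (by linarith) hup hone
    calc topEigSum (simpLap_isHermitian n k S) 2
        ≤ ((S.card : ℝ) + (k : ℝ) - 1) + ((k : ℝ) - 1) := h
    _ ≤ ((k : ℝ) - 1) * S.card + (k : ℝ) + 1 := by nlinarith [hkR, hfR]
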